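/- Let S be a skew Boolean algebra, let r ≥ 1, and let a, b : {1,…,r} → S be families such that a_i D b_i for every i and a_i ∧ a_j = 0 whenever i ≠ j. Write ⋁a for the left-associated join a_1∨a_2∨⋯∨a_r, and similarly for other families. Then: (i) (⋁a)∨(⋁b) = (a_1∨b_1)∨(a_2∨b_2)∨⋯∨(a_r∨b_r); (ii) (⋁a)∧(⋁b) = (a_1∧b_1)∨(a_2∧b_2)∨⋯∨(a_r∧b_r); (iii) (⋁a)\(⋁b) = (a_1\b_1)∨(a_2\b_2)∨⋯∨(a_r\b_r); (iv) if ⋁a = ⋁b then a_i = b_i for all i. -/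
import Mathlib


universe u

/-- A skew Boolean algebra. -/
class SBA (S : Type u) where
  wedge : S → S → S
  vee : S → S → S
  diff : S → S → S
  zero : S
  wedge_assoc : ∀ x y z : S, wedge (wedge x y) z = wedge x (wedge y z)
  vee_assoc : ∀ x y z : S, vee (vee x y) z = vee x (vee y z)
  absorb1 : ∀ x y : S, wedge x (vee x y) = x
  absorb2 : ∀ x y : S, wedge (vee y x) x = x
  absorb3 : ∀ x y : S, vee x (wedge x y) = x
  absorb4 : ∀ x y : S, vee (wedge y x) x = x
  sdistrib1 : ∀ x y z : S, wedge x (vee y z) = vee (wedge x y) (wedge x z)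
  sdistrib2 : ∀ x y z : S, wedge (vee x y) z = vee (wedge x z) (wedge y z)
  zero_wedge : ∀ x : S, wedge zero x = zero
  wedge_zero : ∀ x : S, wedge x zero = zero
  zero_vee : ∀ x : S, vee zero x = x
  vee_zero : ∀ x : S, vee x zero = x
  diff_ax1 : ∀ x y : S, vee (wedge (wedge x y) x) (diff x y) = x
  diff_ax2 : ∀ x y : S, wedge (wedge (wedge x y) x) (diff x y) = zero
  diff_ax3 : ∀ x y : S, wedge (diff x y) (wedge (wedge x y) x) = zero

namespace SBA

scoped infixl:70 " ⋏ " => SBA.wedge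
scoped infixl:65 " ⋎ " => SBA.vee
scoped infixl:70 " ∖ " => SBA.diff

variable {S : Type u} [SBA S]

/-- Green's relation `D`: `x D y` iff `x⋏y⋏x = x` and `y⋏x⋏y = y`. -/
def Drel (x y : S) : Prop := x ⋏ y ⋏ x = x ∧ y ⋏ x ⋏ y = y

/-- The natural partial order: `x ≤ y` iff `x⋏y = x = y⋏x`. -/
def nle (x y : S) : Prop := x ⋏ y = x ∧ y ⋏ x = x

/-- An atom: a nonzero element with nothing strictly between it and `0`. -/
def IsAtom (a : S) : Prop := a ≠ zero ∧ ∀ x : S, nle x a → x = zero ∨ x = a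

/-- `X` generates `S`: the only subset of `S` containing `X` and `0` and closed
under the three operations is `S` itself. -/
def Generates (X : Set S) : Prop :=
  ∀ T : Set S, X ⊆ T → zero ∈ T →
    (∀ a b : S, a ∈ T → b ∈ T → a ⋏ b ∈ T ∧ a ⋎ b ∈ T ∧ a ∖ b ∈ T) →
    T = Set.univ

/-- A homomorphism of skew Boolean algebras. -/
def IsHom {T : Type u} [SBA T] (f : S → T) : Prop :=
  (∀ a b : S, f (a ⋏ b) = f a ⋏ f b) ∧ (∀ a b : S, f (a ⋎ b) = f a ⋎ f b) ∧
    (∀ a b : S, f (a ∖ b) = f a ∖ f b) ∧ f zero = zero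

end SBA

open SBA

/-- A left-handed skew Boolean algebra. -/
class LeftHanded (S : Type u) [SBA S] : Prop where
  lh_wedge : ∀ x y : S, x ⋏ y ⋏ x = x ⋏ y
  lh_vee : ∀ x y : S, x ⋎ y ⋎ x = y ⋎ x

/-- `S` is freely generated by `X` over the variety of all skew Boolean algebras. -/
def FreelyGenerates (S : Type u) [SBA S] (X : Set S) : Prop :=
  Generates X ∧
    ∀ (T : Type u) [SBA T], ∀ g : X → T,
      ∃ f : S → T, IsHom f ∧ ∀ x : X, f x = g x

/-- `S` is freely generated by `X` over the variety of left-handed skew Boolean algebras. -/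
def LFreelyGenerates (S : Type u) [SBA S] [LeftHanded S] (X : Set S) : Prop :=
  Generates X ∧
    ∀ (T : Type u) [SBA T] [LeftHanded T], ∀ g : X → T,
      ∃ f : S → T, IsHom f ∧ ∀ x : X, f x = g x

/-- The left-associated join `a 0 ⋎ a 1 ⋎ ⋯ ⋎ a r` of a nonempty family. -/
def joinFam {S : Type u} [SBA S] : ∀ {r : ℕ}, (Fin (r + 1) → S) → S
  | 0, a => a 0
  | _ + 1, a => SBA.vee (joinFam fun i => a i.castSucc) (a (Fin.last _))

section Lemmas

variable {S : Type u} [SBA S]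

lemma my_wedge_idem (x : S) : x ⋏ x = x := by
  have h := SBA.absorb1 x (x ⋏ x)
  rwa [SBA.absorb3 x x] at h

lemma my_vee_idem (x : S) : x ⋎ x = x := by
  have h := SBA.absorb3 x (x ⋎ x)
  rwa [SBA.absorb1 x x] at h

/-- If `x ⋏ y = 0` then `x ⋏ z ⋏ y = 0`. -/
lemma my_zmid (x z y : S) (h : x ⋏ y = SBA.zero) : x ⋏ z ⋏ y = SBA.zero := by
  have e1 : x ⋏ (z ⋎ y) = x ⋏ z := by rw [SBA.sdistrib1, h, SBA.vee_zero]
  calc x ⋏ z ⋏ y = (x ⋏ (z ⋎ y)) ⋏ y := by rw [e1]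
    _ = x ⋏ ((z ⋎ y) ⋏ y) := SBA.wedge_assoc ..
    _ = x ⋏ y := by rw [SBA.sdistrib2, my_wedge_idem, SBA.absorb4]
    _ = SBA.zero := h

/-- Orthogonal elements commute under `⋎`. -/
lemma my_orth_comm (x y : S) (hxy : x ⋏ y = SBA.zero) (hyx : y ⋏ x = SBA.zero) :
    x ⋎ y = y ⋎ x := by
  have h1 : (x ⋎ y) ⋏ (y ⋎ x) = x ⋎ y := by
    rw [SBA.sdistrib2, SBA.sdistrib1, SBA.sdistrib1, hxy, hyx, my_wedge_idem, my_wedge_idem,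
      SBA.zero_vee, SBA.vee_zero]
  have h2 : (x ⋎ y) ⋏ (y ⋎ x) = y ⋎ x := by
    rw [SBA.sdistrib1, SBA.sdistrib2, SBA.sdistrib2, hxy, hyx, my_wedge_idem, my_wedge_idem,
      SBA.zero_vee, SBA.vee_zero]
  rw [← h1, h2]

/-- Uniqueness of (right) complements. -/
lemma my_diff_unique (X m c₁ c₂ : S) (h1 : m ⋎ c₁ = X) (h2 : m ⋏ c₁ = SBA.zero)
    (h4 : m ⋎ c₂ = X) (h5 : m ⋏ c₂ = SBA.zero) (h6 : c₂ ⋏ m = SBA.zero) : c₁ = c₂ := by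
  have e1 : X ⋏ c₁ = c₁ := by rw [← h1, SBA.sdistrib2, h2, SBA.zero_vee, my_wedge_idem]
  have e2 : X ⋏ c₁ = c₂ ⋏ c₁ := by rw [← h4, SBA.sdistrib2, h2, SBA.zero_vee]
  have e3 : c₂ ⋏ X = c₂ := by rw [← h4, SBA.sdistrib1, h6, SBA.zero_vee, my_wedge_idem]
  have e4 : c₂ ⋏ X = c₂ ⋏ c₁ := by rw [← h1, SBA.sdistrib1, h6, SBA.zero_vee]
  rw [← e1, e2, ← e4, e3]

lemma my_joinFam_succ {n : ℕ} (a : Fin (n + 2) → S) :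
    joinFam a = joinFam (fun i => a i.castSucc) ⋎ a (Fin.last (n + 1)) := rfl

lemma my_joinFam_congr {r : ℕ} {a b : Fin (r + 1) → S} (h : ∀ i, a i = b i) :
    joinFam a = joinFam b := congrArg joinFam (funext h)

lemma my_joinFam_wedge {r : ℕ} (a : Fin (r + 1) → S) (c : S) :
    joinFam a ⋏ c = joinFam (fun i => a i ⋏ c) := by
  induction r with
  | zero => rfl
  | succ n ih => rw [my_joinFam_succ, SBA.sdistrib2, ih]; rfl

lemma my_wedge_joinFam {r : ℕ} (c : S) (a : Fin (r + 1) → S) :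
    c ⋏ joinFam a = joinFam (fun i => c ⋏ a i) := by
  induction r with
  | zero => rfl
  | succ n ih => rw [my_joinFam_succ, SBA.sdistrib1, ih]; rfl

lemma my_joinFam_zero {r : ℕ} (a : Fin (r + 1) → S) (h : ∀ i, a i = SBA.zero) :
    joinFam a = SBA.zero := by
  induction r with
  | zero => exact h 0
  | succ n ih =>
      rw [my_joinFam_succ, h, SBA.vee_zero]
      exact ih _ fun i => h _

lemma my_joinFam_single {r : ℕ} (a : Fin (r + 1) → S) (j : Fin (r + 1))
    (h : ∀ i, i ≠ j → a i = SBA.zero) : joinFam a = a j := by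
  induction r with
  | zero =>
      show a 0 = a j
      exact congrArg a (@Subsingleton.elim _ Fin.subsingleton_one _ _)
  | succ n ih =>
      by_cases hj : j = Fin.last (n + 1)
      · subst hj
        rw [my_joinFam_succ,
          my_joinFam_zero _ (fun i => h i.castSucc (Fin.castSucc_lt_last i).ne), SBA.zero_vee]
      · have hlast : a (Fin.last (n + 1)) = SBA.zero := h _ (Ne.symm hj)
        rw [my_joinFam_succ, hlast, SBA.vee_zero]
        have := ih (fun i => a i.castSucc) (j.castPred hj) (fun i hi => h i.castSucc (by
          rw [← Fin.castSucc_castPred j hj]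
          exact fun hc => hi (Fin.castSucc_injective _ hc)))
        rw [this]
        exact congrArg a (Fin.castSucc_castPred j hj)

/-- Meets of joins of cross-orthogonal families. -/
lemma my_pair_meet {r : ℕ} (u w : Fin (r + 1) → S)
    (h : ∀ i j, i ≠ j → u i ⋏ w j = SBA.zero) :
    joinFam u ⋏ joinFam w = joinFam (fun i => u i ⋏ w i) := by
  rw [my_joinFam_wedge]
  exact my_joinFam_congr fun i => by
    rw [my_wedge_joinFam]
    exact my_joinFam_single _ i fun jj hj => h i jj (Ne.symm hj)

/-- Joins of cross-orthogonal families interleave. -/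
lemma my_join_interleave {r : ℕ} (u w : Fin (r + 1) → S)
    (h : ∀ i j, i ≠ j → u i ⋏ w j = SBA.zero)
    (h' : ∀ i j, i ≠ j → w i ⋏ u j = SBA.zero) :
    joinFam u ⋎ joinFam w = joinFam (fun i => u i ⋎ w i) := by
  induction r with
  | zero => rfl
  | succ n ih =>
      have hc : u (Fin.last (n + 1)) ⋎ joinFam (fun i => w i.castSucc)
          = joinFam (fun i => w i.castSucc) ⋎ u (Fin.last (n + 1)) := by
        apply my_orth_comm
        · rw [my_wedge_joinFam]
          exact my_joinFam_zero _ fun i => h _ _ (Fin.castSucc_lt_last i).ne'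
        · rw [my_joinFam_wedge]
          exact my_joinFam_zero _ fun i => h' _ _ (Fin.castSucc_lt_last i).ne
      calc joinFam u ⋎ joinFam w
          = joinFam (fun i => u i.castSucc) ⋎ ((u (Fin.last (n + 1)) ⋎
              joinFam (fun i => w i.castSucc)) ⋎ w (Fin.last (n + 1))) := by
            rw [my_joinFam_succ u, my_joinFam_succ w, SBA.vee_assoc, SBA.vee_assoc]
        _ = joinFam (fun i => u i.castSucc) ⋎ ((joinFam (fun i => w i.castSucc) ⋎
              u (Fin.last (n + 1))) ⋎ w (Fin.last (n + 1))) := by rw [hc]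
        _ = (joinFam (fun i => u i.castSucc) ⋎ joinFam (fun i => w i.castSucc)) ⋎
              (u (Fin.last (n + 1)) ⋎ w (Fin.last (n + 1))) := by
            rw [SBA.vee_assoc, SBA.vee_assoc]
        _ = joinFam (fun i => u i.castSucc ⋎ w i.castSucc) ⋎
              (u (Fin.last (n + 1)) ⋎ w (Fin.last (n + 1))) := by
            rw [ih (fun i => u i.castSucc) (fun i => w i.castSucc)
              (fun i jj hij => h _ _ (fun e => hij (Fin.castSucc_injective _ e)))
              (fun i jj hij => h' _ _ (fun e => hij (Fin.castSucc_injective _ e)))]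
        _ = joinFam (fun i => u i ⋎ w i) := rfl

end Lemmas

theorem stmt2 (S : Type u) [SBA S] (r : ℕ) (a b : Fin (r + 1) → S)
    (hD : ∀ i, Drel (a i) (b i))
    (horth : ∀ i j, i ≠ j → a i ⋏ a j = SBA.zero) :
    joinFam a ⋎ joinFam b = joinFam (fun i => a i ⋎ b i) ∧
    joinFam a ⋏ joinFam b = joinFam (fun i => a i ⋏ b i) ∧
    joinFam a ∖ joinFam b = joinFam (fun i => a i ∖ b i) ∧
    (joinFam a = joinFam b → ∀ i, a i = b i) := by
  -- cross-orthogonality facts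
  have fact1 : ∀ i j, i ≠ j → a i ⋏ b j = SBA.zero := by
    intro i j hij
    have hd := (hD j).2
    calc a i ⋏ b j = a i ⋏ (b j ⋏ a j ⋏ b j) := by rw [hd]
      _ = (a i ⋏ b j ⋏ a j) ⋏ b j := by rw [SBA.wedge_assoc, SBA.wedge_assoc, SBA.wedge_assoc]
      _ = SBA.zero ⋏ b j := by rw [my_zmid _ _ _ (horth i j hij)]
      _ = SBA.zero := SBA.zero_wedge _
  have fact2 : ∀ i j, i ≠ j → b i ⋏ a j = SBA.zero := by
    intro i j hij
    have hd := (hD i).2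
    have hz : a i ⋏ (b i ⋏ a j) = SBA.zero := by
      have h0 := my_zmid (a i) (b i) (a j) (horth i j hij)
      rwa [SBA.wedge_assoc] at h0
    calc b i ⋏ a j = (b i ⋏ a i ⋏ b i) ⋏ a j := by rw [hd]
      _ = b i ⋏ (a i ⋏ (b i ⋏ a j)) := by rw [SBA.wedge_assoc, SBA.wedge_assoc]
      _ = SBA.zero := by rw [hz, SBA.wedge_zero]
  have fact3 : ∀ i j, i ≠ j → b i ⋏ b j = SBA.zero := by
    intro i j hij
    have hd := (hD i).2
    have hz : a i ⋏ (b i ⋏ b j) = SBA.zero := by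
      have h0 := my_zmid (a i) (b i) (b j) (fact1 i j hij)
      rwa [SBA.wedge_assoc] at h0
    calc b i ⋏ b j = (b i ⋏ a i ⋏ b i) ⋏ b j := by rw [hd]
      _ = b i ⋏ (a i ⋏ (b i ⋏ b j)) := by rw [SBA.wedge_assoc, SBA.wedge_assoc]
      _ = SBA.zero := by rw [hz, SBA.wedge_zero]
  -- part (i)
  have part1 : joinFam a ⋎ joinFam b = joinFam (fun i => a i ⋎ b i) :=
    my_join_interleave a b fact1 fact2
  -- part (ii)
  have part2 : joinFam a ⋏ joinFam b = joinFam (fun i => a i ⋏ b i) :=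
    my_pair_meet a b fact1
  -- part (iii)
  set m : Fin (r + 1) → S := fun i => a i ⋏ b i ⋏ a i with hm_def
  set c : Fin (r + 1) → S := fun i => a i ∖ b i with hc_def
  have dm1 : ∀ i, m i ⋎ c i = a i := fun i => SBA.diff_ax1 (a i) (b i)
  have dm2 : ∀ i, m i ⋏ c i = SBA.zero := fun i => SBA.diff_ax2 (a i) (b i)
  have dm3 : ∀ i, c i ⋏ m i = SBA.zero := fun i => SBA.diff_ax3 (a i) (b i)
  have hac : ∀ i, a i ⋏ c i = c i := by
    intro i
    rw [← dm1 i, SBA.sdistrib2, dm2, SBA.zero_vee, my_wedge_idem]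
  have hca : ∀ i, c i ⋏ a i = c i := by
    intro i
    rw [← dm1 i, SBA.sdistrib1, dm3, SBA.zero_vee, my_wedge_idem]
  have hma : ∀ i, m i ⋏ a i = m i := by
    intro i
    show a i ⋏ b i ⋏ a i ⋏ a i = _
    rw [SBA.wedge_assoc (a i ⋏ b i), my_wedge_idem]
  have ham : ∀ i, a i ⋏ m i = m i := by
    intro i
    show a i ⋏ (a i ⋏ b i ⋏ a i) = _
    rw [← SBA.wedge_assoc, ← SBA.wedge_assoc, my_wedge_idem]
  have cross : ∀ (P Q : S) (i j : Fin (r + 1)), P ⋏ a i = P → a j ⋏ Q = Q → i ≠ j →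
      P ⋏ Q = SBA.zero := by
    intro P Q i j hP hQ hij
    calc P ⋏ Q = (P ⋏ a i) ⋏ (a j ⋏ Q) := by rw [hP, hQ]
      _ = P ⋏ ((a i ⋏ a j) ⋏ Q) := by rw [SBA.wedge_assoc, SBA.wedge_assoc]
      _ = P ⋏ SBA.zero := by rw [horth i j hij, SBA.zero_wedge]
      _ = SBA.zero := SBA.wedge_zero _
  have hABA : joinFam a ⋏ joinFam b ⋏ joinFam a = joinFam m := by
    rw [part2, my_pair_meet (fun i => a i ⋏ b i) a (by
      intro i j hij
      rw [SBA.wedge_assoc, fact2 i j hij, SBA.wedge_zero])]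
  have hMC_join : joinFam m ⋎ joinFam c = joinFam a := by
    rw [my_join_interleave m c
      (fun i j hij => cross _ _ i j (hma i) (hac j) hij)
      (fun i j hij => cross _ _ i j (hca i) (ham j) hij)]
    exact my_joinFam_congr dm1
  have hMC_meet : joinFam m ⋏ joinFam c = SBA.zero := by
    rw [my_pair_meet m c (fun i j hij => cross _ _ i j (hma i) (hac j) hij)]
    exact my_joinFam_zero _ dm2
  have hCM_meet : joinFam c ⋏ joinFam m = SBA.zero := by
    rw [my_pair_meet c m (fun i j hij => cross _ _ i j (hca i) (ham j) hij)]
    exact my_joinFam_zero _ dm3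
  have part3 : joinFam a ∖ joinFam b = joinFam c := by
    refine my_diff_unique (joinFam a) (joinFam m) _ _ ?_ ?_ hMC_join hMC_meet hCM_meet
    · rw [← hABA]; exact SBA.diff_ax1 _ _
    · rw [← hABA]; exact SBA.diff_ax2 _ _
  -- part (iv)
  have part4 : joinFam a = joinFam b → ∀ i, a i = b i := by
    intro hAB i
    have haA : joinFam a ⋏ a i = a i := by
      rw [my_joinFam_wedge,
        my_joinFam_single _ i (fun j hj => horth j i hj), my_wedge_idem]
    have hbA : joinFam b ⋏ a i = b i ⋏ a i := by
      rw [my_joinFam_wedge, my_joinFam_single (fun j => b j ⋏ a i) i (fun j hj => fact2 j i hj)]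
    have h1 : b i ⋏ a i = a i := by rw [← hbA, ← hAB, haA]
    have hbB : b i ⋏ joinFam b = b i := by
      rw [my_wedge_joinFam,
        my_joinFam_single _ i (fun j hj => fact3 i j (Ne.symm hj)), my_wedge_idem]
    have hbA2 : b i ⋏ joinFam a = b i ⋏ a i := by
      rw [my_wedge_joinFam, my_joinFam_single (fun j => b i ⋏ a j) i
        (fun j hj => fact2 i j (Ne.symm hj))]
    have h2 : b i ⋏ a i = b i := by rw [← hbA2, hAB, hbB]
    rw [← h1, h2]
  exact ⟨part1, part2, part3, part4⟩
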